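/- arXiv:1909.06468 — 3 statements merged into one kernel-verified Lean document; each statement's English description precedes it below -/
import Mathlib

section
/- Let n, n̂, m̂, m be positive integers, let γ > 0, let X̂ ⊆ ℝ^n̂ and Û ⊆ ℝ^m̂, let V : ℝⁿ → ℝ be continuously differentiable with V(0) = 0, V(e) > 0 for all e ≠ 0, and V radially unbounded, i.e. V(e) → ∞ as ‖e‖ → ∞. Let f_e : ℝⁿ × ℝ^n̂ × ℝ^m̂ → ℝⁿ, g_e : ℝⁿ × ℝ^n̂ → Matrix(n, m, ℝ), κ : ℝⁿ × ℝ^n̂ × ℝ^m̂ → ℝᵐ, and assume that for all e ∈ ℝⁿ, x̂ ∈ X̂, û ∈ Û with V(e) ≥ γ one has ⟪∇V(e), f_e(e, x̂, û) + g_e(e, x̂) · κ(e, x̂, û)⟫ < 0. Let x̂ : ℝ → ℝ^n̂ and û : ℝ → ℝ^m̂ satisfy x̂(t) ∈ X̂ and û(t) ∈ Û for all t ≥ 0, and let e : ℝ → ℝⁿ be differentiable on [0, ∞) with e'(t) = f_e(e(t), x̂(t), û(t)) + g_e(e(t), x̂(t)) · κ(e(t), x̂(t), û(t)) for all t ≥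 0. Then for every initial condition e(0) ∈ ℝⁿ, one has V(e(t)) ≤ max(V(e(0)), γ) for all t ≥ 0, and consequently the trajectory {e(t) : t ≥ 0} is a bounded subset of ℝⁿ. -/
open Matrix Set Filter

/-- Proposition 1 (boundedness part): with a radially unbounded simulation function `V`
that strictly decreases along the closed-loop error dynamics whenever `V e ≥ γ`, every
error trajectory satisfies `V (e t) ≤ max (V (e 0)) γ` for all `t ≥ 0`, and hence the
trajectory `{e t : t ≥ 0}` is bounded. -/
theorem prop1_boundedness
    (n nh mh m : ℕ) (hn : 0 < n) (hnh : 0 < nh) (hmh : 0 < mh) (hm : 0 < m)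
    (γ : ℝ) (hγ : 0 < γ)
    (Xhat : Set (EuclideanSpace ℝ (Fin nh))) (Uhat : Set (EuclideanSpace ℝ (Fin mh)))
    (V : EuclideanSpace ℝ (Fin n) → ℝ) (hV : ContDiff ℝ 1 V)
    (hV0 : V 0 = 0) (hVpos : ∀ e : EuclideanSpace ℝ (Fin n), e ≠ 0 → 0 < V e)
    (hVrad : Tendsto V (comap (fun e : EuclideanSpace ℝ (Fin n) => ‖e‖) atTop) atTop)
    (f_e : EuclideanSpace ℝ (Fin n) → EuclideanSpace ℝ (Fin nh) → EuclideanSpace ℝ (Fin mh) →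
      EuclideanSpace ℝ (Fin n))
    (g_e : EuclideanSpace ℝ (Fin n) → EuclideanSpace ℝ (Fin nh) → Matrix (Fin n) (Fin m) ℝ)
    (κ : EuclideanSpace ℝ (Fin n) → EuclideanSpace ℝ (Fin nh) → EuclideanSpace ℝ (Fin mh) →
      EuclideanSpace ℝ (Fin m))
    (hdecr : ∀ (e : EuclideanSpace ℝ (Fin n)), ∀ xh ∈ Xhat, ∀ uh ∈ Uhat, γ ≤ V e →
      inner (𝕜 := ℝ) (gradient V e)
        (f_e e xh uh + (WithLp.equiv 2 (Fin n → ℝ)).symm ((g_e e xh).mulVec (κ e xh uh))) < 0)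
    (xhat : ℝ → EuclideanSpace ℝ (Fin nh)) (uhat : ℝ → EuclideanSpace ℝ (Fin mh))
    (hxhat : ∀ t : ℝ, 0 ≤ t → xhat t ∈ Xhat) (huhat : ∀ t : ℝ, 0 ≤ t → uhat t ∈ Uhat)
    (e : ℝ → EuclideanSpace ℝ (Fin n))
    (he : ∀ t : ℝ, 0 ≤ t →
      HasDerivWithinAt e
        (f_e (e t) (xhat t) (uhat t) +
          (WithLp.equiv 2 (Fin n → ℝ)).symm
            ((g_e (e t) (xhat t)).mulVec (κ (e t) (xhat t) (uhat t))))
        (Ici (0 : ℝ)) t) :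
    (∀ t : ℝ, 0 ≤ t → V (e t) ≤ max (V (e 0)) γ) ∧
      Bornology.IsBounded (e '' Ici (0 : ℝ)) := by
  set M : ℝ := max (V (e 0)) γ with hM
  -- continuity of V ∘ e on [0, ∞)
  have hecont : ContinuousOn e (Ici (0 : ℝ)) := fun t ht =>
    (he t ht).continuousWithinAt
  have hWcont : ContinuousOn (fun t => V (e t)) (Ici (0 : ℝ)) :=
    hV.continuous.comp_continuousOn hecont
  -- derivative of V ∘ e at interior points
  have hWderiv : ∀ s : ℝ, 0 < s → γ ≤ V (e s) → deriv (fun t => V (e t)) s < 0 := by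
    intro s hs hγs
    have heAt : HasDerivAt e
        (f_e (e s) (xhat s) (uhat s) +
          (WithLp.equiv 2 (Fin n → ℝ)).symm
            ((g_e (e s) (xhat s)).mulVec (κ (e s) (xhat s) (uhat s)))) s :=
      (he s hs.le).hasDerivAt (Ici_mem_nhds hs)
    have hVd : HasGradientAt V (gradient V (e s)) (e s) :=
      (hV.differentiable one_ne_zero (e s)).hasGradientAt
    have hW : HasDerivAt (fun t => V (e t))
        (inner (𝕜 := ℝ) (gradient V (e s))
          (f_e (e s) (xhat s) (uhat s) +
            (WithLp.equiv 2 (Fin n → ℝ)).symm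
              ((g_e (e s) (xhat s)).mulVec (κ (e s) (xhat s) (uhat s))))) s := by
      have := hVd.hasFDerivAt.comp_hasDerivAt s heAt
      simp [InnerProductSpace.toDual_apply_apply] at this ⊢
      convert this using 1 <;> rfl
    rw [hW.deriv]
    exact hdecr (e s) (xhat s) (hxhat s hs.le) (uhat s) (huhat s hs.le) hγs
  -- the main claim
  have main : ∀ t : ℝ, 0 ≤ t → V (e t) ≤ M := by
    intro t ht
    by_contra hlt
    push_neg at hlt
    -- set of times where W ≤ M
    set T : Set ℝ := {s | s ∈ Icc 0 t ∧ V (e s) ≤ M} with hT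
    have h0T : (0 : ℝ) ∈ T := ⟨⟨le_rfl, ht⟩, le_max_left _ _⟩
    have hTne : T.Nonempty := ⟨0, h0T⟩
    have hTbdd : BddAbove T := ⟨t, fun s hs => hs.1.2⟩
    have hTclosed : IsClosed T := by
      have : T = Icc 0 t ∩ (fun s => V (e s)) ⁻¹' Iic M := by
        ext s; simp [hT, And.comm]
      rw [this]
      exact (hWcont.mono (Icc_subset_Ici_self)).preimage_isClosed_of_isClosed
        isClosed_Icc isClosed_Iic
    set s₀ : ℝ := sSup T with hs₀
    have hs₀T : s₀ ∈ T := hTclosed.csSup_mem hTne hTbdd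
    have hs₀0 : 0 ≤ s₀ := hs₀T.1.1
    have hs₀le : s₀ ≤ t := hs₀T.1.2
    have hs₀lt : s₀ < t := by
      rcases lt_or_eq_of_le hs₀le with h | h
      · exact h
      · exact absurd (h ▸ hs₀T.2) (not_le.mpr hlt)
    -- on (s₀, t], W > M
    have hbig : ∀ s ∈ Ioc s₀ t, M < V (e s) := by
      intro s hs
      by_contra hh
      push_neg at hh
      exact absurd (le_csSup hTbdd ⟨⟨hs₀0.trans hs.1.le, hs.2⟩, hh⟩) (not_le.mpr hs.1)
    -- strict anti on [s₀, t]
    have hanti : StrictAntiOn (fun s => V (e s)) (Icc s₀ t) := by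
      apply strictAntiOn_of_deriv_neg (convex_Icc s₀ t)
        (hWcont.mono (Icc_subset_Ici_self.trans (Ici_subset_Ici.mpr hs₀0)))
      intro s hs
      rw [interior_Icc] at hs
      exact hWderiv s (lt_of_le_of_lt hs₀0 hs.1)
        (le_trans (le_max_right _ _) (hbig s ⟨hs.1, hs.2.le⟩).le)
    have := hanti ⟨le_rfl, hs₀le⟩ ⟨hs₀le, le_rfl⟩ hs₀lt
    exact absurd (lt_of_le_of_lt hs₀T.2 hlt) (not_lt.mpr this.le)
  refine ⟨main, ?_⟩
  -- radial unboundedness gives a radius R with ‖x‖ ≥ R → V x > M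
  have : ∀ᶠ x in comap (fun e : EuclideanSpace ℝ (Fin n) => ‖e‖) atTop, M < V x :=
    hVrad.eventually (eventually_gt_atTop M)
  rcases this.exists_mem with ⟨S, hS, hSsub⟩
  rcases mem_comap.mp hS with ⟨U, hU, hUsub⟩
  rcases mem_atTop_sets.mp hU with ⟨R, hR⟩
  have hball : e '' Ici (0 : ℝ) ⊆ Metric.closedBall 0 R := by
    rintro x ⟨t, ht, rfl⟩
    rw [Metric.mem_closedBall, dist_zero_right]
    by_contra hx
    push_neg at hx
    have : M < V (e t) := hSsub _ (hUsub (hR ‖e t‖ hx.le))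
    exact absurd (main t ht) (not_le.mpr this)
  exact (Metric.isBounded_closedBall).subset hball
end

section
/- Let n, n̂, m̂, m be positive integers, let γ > 0, let X̂ ⊆ ℝ^n̂ and Û ⊆ ℝ^m̂ be nonempty compact sets, let V : ℝⁿ → ℝ be continuously differentiable with V(0) = 0, V(e) > 0 for all e ≠ 0, and V radially unbounded (V(e) → ∞ as ‖e‖ → ∞). Let f_e : ℝⁿ × ℝ^n̂ × ℝ^m̂ → ℝⁿ, g_e : ℝⁿ × ℝ^n̂ → Matrix(n, m, ℝ), κ : ℝⁿ × ℝ^n̂ × ℝ^m̂ → ℝᵐ all be continuous, and assume that for all e ∈ ℝⁿ, x̂ ∈ X̂, û ∈ Û with V(e) ≥ γ one has ⟪∇V(e), f_e(e, x̂, û) + g_e(e, x̂) · κ(e, x̂, û)⟫ < 0. Let x̂ : ℝ → ℝ^n̂ and û : ℝ → ℝ^m̂ satisfy x̂(t) ∈ X̂ and û(t) ∈ Û for all t ≥ 0, and let e : ℝ → ℝⁿ be differentiable on [0, ∞) with e'(t) = f_e(e(t), x̂(t), û(t)) + g_e(e(t), x̂(t)) · κ(e(t), x̂(t), û(t)) for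 all t ≥ 0. Then for every initial condition e(0) ∈ ℝⁿ there exists T ≥ 0 such that V(e(t)) ≤ γ for all t ≥ T; in particular, e(t) converges to the sublevel set Ω_γ^V := {e : V(e) ≤ γ}, i.e. dist(e(t), Ω_γ^V) → 0 as t → ∞. -/
open Matrix Set Filter

/-- Barrier lemma: if `W` has derivative `D` on `Ici 0` and `D t < 0` whenever `γ ≤ W t`,
then any sublevel `{W ≤ b}` with `γ ≤ b` is forward invariant. -/
private lemma barrier_aux {W D : ℝ → ℝ} {γ : ℝ}
    (hW : ∀ t, 0 ≤ t → HasDerivWithinAt W (D t) (Ici (0:ℝ)) t)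
    (hD : ∀ t, 0 ≤ t → γ ≤ W t → D t < 0)
    {s b : ℝ} (hs : 0 ≤ s) (hb : γ ≤ b) (hWs : W s ≤ b) :
    ∀ t, s ≤ t → W t ≤ b := by
  intro t hst
  by_contra h
  push_neg at h
  have hWc : ContinuousOn W (Ici 0) := fun u hu => (hW u hu).continuousWithinAt
  have hst' : s < t := by
    rcases lt_or_eq_of_le hst with h' | h'
    · exact h'
    · exact absurd hWs (by rw [h']; exact not_le.2 h)
  set S : Set ℝ := Icc s t ∩ W ⁻¹' (Iic b) with hSdef
  have hSne : S.Nonempty := ⟨s, ⟨le_rfl, hst⟩, hWs⟩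
  have hSbdd : BddAbove S := ⟨t, fun u hu => hu.1.2⟩
  have hsub : Icc s t ⊆ Ici (0:ℝ) := fun u hu => hs.trans hu.1
  have hSclosed : IsClosed S :=
    (hWc.mono hsub).preimage_isClosed_of_isClosed isClosed_Icc isClosed_Iic
  set r := sSup S with hrdef
  obtain ⟨⟨hsr, hrt'⟩, hrW⟩ := hSclosed.csSup_mem hSne hSbdd
  have hrt : r < t := by
    rcases lt_or_eq_of_le hrt' with h' | h'
    · exact h'
    · exact absurd (h' ▸ hrW : W t ≤ b) (not_le.2 h)
  have hr0 : 0 ≤ r := hs.trans hsr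
  have hgt : ∀ u ∈ Ioc r t, b < W u := by
    intro u hu
    by_contra hle
    push_neg at hle
    have : u ≤ r := le_csSup hSbdd ⟨⟨hsr.trans hu.1.le, hu.2⟩, hle⟩
    exact absurd hu.1 (not_lt.2 this)
  have hanti : StrictAntiOn W (Icc r t) := by
    apply strictAntiOn_of_deriv_neg (convex_Icc r t)
      (hWc.mono fun u hu => hr0.trans hu.1)
    intro u hu
    rw [interior_Icc] at hu
    have hu0 : 0 < u := lt_of_le_of_lt hr0 hu.1
    have hder : HasDerivAt W (D u) u := (hW u hu0.le).hasDerivAt (Ici_mem_nhds hu0)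
    rw [hder.deriv]
    exact hD u hu0.le (hb.trans (hgt u ⟨hu.1, hu.2.le⟩).le)
  have : W t < W r := hanti ⟨le_rfl, hrt.le⟩ ⟨hrt.le, le_rfl⟩ hrt
  exact absurd (this.trans_le hrW) (not_lt.2 h.le)

/-- Proposition 1 (convergence part): with compact constraint sets, continuous data and a
radially unbounded simulation function `V` that strictly decreases along the closed-loop
error dynamics whenever `V e ≥ γ`, every error trajectory enters the sublevel set
`Ω_γ^V = {e | V e ≤ γ}` in finite time; in particular `dist (e t, Ω_γ^V) → 0`. -/
theorem prop1_convergence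
    (n nh mh m : ℕ) (hn : 0 < n) (hnh : 0 < nh) (hmh : 0 < mh) (hm : 0 < m)
    (γ : ℝ) (hγ : 0 < γ)
    (Xhat : Set (EuclideanSpace ℝ (Fin nh))) (Uhat : Set (EuclideanSpace ℝ (Fin mh)))
    (hXne : Xhat.Nonempty) (hXcp : IsCompact Xhat)
    (hUne : Uhat.Nonempty) (hUcp : IsCompact Uhat)
    (V : EuclideanSpace ℝ (Fin n) → ℝ) (hV : ContDiff ℝ 1 V)
    (hV0 : V 0 = 0) (hVpos : ∀ e : EuclideanSpace ℝ (Fin n), e ≠ 0 → 0 < V e)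
    (hVrad : Tendsto V (comap (fun e : EuclideanSpace ℝ (Fin n) => ‖e‖) atTop) atTop)
    (f_e : EuclideanSpace ℝ (Fin n) → EuclideanSpace ℝ (Fin nh) → EuclideanSpace ℝ (Fin mh) →
      EuclideanSpace ℝ (Fin n))
    (g_e : EuclideanSpace ℝ (Fin n) → EuclideanSpace ℝ (Fin nh) → Matrix (Fin n) (Fin m) ℝ)
    (κ : EuclideanSpace ℝ (Fin n) → EuclideanSpace ℝ (Fin nh) → EuclideanSpace ℝ (Fin mh) →
      EuclideanSpace ℝ (Fin m))
    (hf_cont : Continuous fun p : EuclideanSpace ℝ (Fin n) × EuclideanSpace ℝ (Fin nh) ×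
      EuclideanSpace ℝ (Fin mh) => f_e p.1 p.2.1 p.2.2)
    (hg_cont : Continuous fun p : EuclideanSpace ℝ (Fin n) × EuclideanSpace ℝ (Fin nh) =>
      g_e p.1 p.2)
    (hκ_cont : Continuous fun p : EuclideanSpace ℝ (Fin n) × EuclideanSpace ℝ (Fin nh) ×
      EuclideanSpace ℝ (Fin mh) => κ p.1 p.2.1 p.2.2)
    (hdecr : ∀ (e : EuclideanSpace ℝ (Fin n)), ∀ xh ∈ Xhat, ∀ uh ∈ Uhat, γ ≤ V e →
      inner (𝕜 := ℝ) (gradient V e)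
        (f_e e xh uh + (WithLp.equiv 2 (Fin n → ℝ)).symm ((g_e e xh).mulVec (κ e xh uh))) < 0)
    (xhat : ℝ → EuclideanSpace ℝ (Fin nh)) (uhat : ℝ → EuclideanSpace ℝ (Fin mh))
    (hxhat : ∀ t : ℝ, 0 ≤ t → xhat t ∈ Xhat) (huhat : ∀ t : ℝ, 0 ≤ t → uhat t ∈ Uhat)
    (e : ℝ → EuclideanSpace ℝ (Fin n))
    (he : ∀ t : ℝ, 0 ≤ t →
      HasDerivWithinAt e
        (f_e (e t) (xhat t) (uhat t) +
          (WithLp.equiv 2 (Fin n → ℝ)).symm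
            ((g_e (e t) (xhat t)).mulVec (κ (e t) (xhat t) (uhat t))))
        (Ici (0 : ℝ)) t) :
    (∃ T : ℝ, 0 ≤ T ∧ ∀ t : ℝ, T ≤ t → V (e t) ≤ γ) ∧
      Tendsto (fun t : ℝ => Metric.infDist (e t) {y : EuclideanSpace ℝ (Fin n) | V y ≤ γ})
        atTop (nhds 0) := by
  classical
  set vel : ℝ → EuclideanSpace ℝ (Fin n) := fun t => f_e (e t) (xhat t) (uhat t) +
      (WithLp.equiv 2 (Fin n → ℝ)).symm
        ((g_e (e t) (xhat t)).mulVec (κ (e t) (xhat t) (uhat t))) with hveldef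
  set W : ℝ → ℝ := fun t => V (e t) with hWdef
  set D : ℝ → ℝ := fun t => inner (𝕜 := ℝ) (gradient V (e t)) (vel t) with hDdef
  have hVdiff : Differentiable ℝ V := hV.differentiable one_ne_zero
  have key : ∀ (x v : EuclideanSpace ℝ (Fin n)), inner (𝕜 := ℝ) (gradient V x) v = fderiv ℝ V x v := by
    intro x v
    rw [gradient]
    exact InnerProductSpace.toDual_symm_apply
  have hW : ∀ t, 0 ≤ t → HasDerivWithinAt W (D t) (Ici (0:ℝ)) t := by
    intro t ht
    have h1 : HasDerivWithinAt (V ∘ e) (fderiv ℝ V (e t) (vel t)) (Ici 0) t :=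
      (hVdiff (e t)).hasFDerivAt.comp_hasDerivWithinAt t (he t ht)
    have : D t = fderiv ℝ V (e t) (vel t) := key (e t) (vel t)
    rw [this]
    exact h1
  have hD : ∀ t, 0 ≤ t → γ ≤ W t → D t < 0 := fun t ht hγt =>
    hdecr (e t) _ (hxhat t ht) _ (huhat t ht) hγt
  -- the compact region and uniform decrease rate
  set c : ℝ := max (W 0) γ with hcdef
  have hγc : γ ≤ c := le_max_right _ _
  -- radial unboundedness gives a bound on the sublevel set
  have hrad : ∃ R : ℝ, ∀ x : EuclideanSpace ℝ (Fin n), R ≤ ‖x‖ → c + 1 ≤ V x := by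
    have h1 : ∀ᶠ x in comap (fun x : EuclideanSpace ℝ (Fin n) => ‖x‖) atTop, c + 1 ≤ V x :=
      hVrad.eventually (eventually_ge_atTop (c + 1))
    rw [eventually_comap] at h1
    obtain ⟨R, hR⟩ := eventually_atTop.1 h1
    exact ⟨R, fun x hx => hR ‖x‖ hx x rfl⟩
  obtain ⟨R, hR⟩ := hrad
  set A : Set (EuclideanSpace ℝ (Fin n)) := {x | γ ≤ V x} ∩ {x | V x ≤ c} with hAdef
  have hAcl : IsClosed A :=
    ((isClosed_le continuous_const hV.continuous).inter
      (isClosed_le hV.continuous continuous_const))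
  have hAbd : Bornology.IsBounded A := by
    apply (Metric.isBounded_closedBall (x := (0:EuclideanSpace ℝ (Fin n))) (r := R)).subset
    intro x hx
    rw [Metric.mem_closedBall, dist_zero_right]
    by_contra hc'
    push_neg at hc'
    have h1 := hR x hc'.le
    have h2 : V x ≤ c := hx.2
    linarith
  have hAcp : IsCompact A := Metric.isCompact_of_isClosed_isBounded hAcl hAbd
  have hAne : A.Nonempty := by
    set x₀ : EuclideanSpace ℝ (Fin n) := EuclideanSpace.single ⟨0, hn⟩ (max R 0 + 1) with hx₀def
    have hnorm : ‖x₀‖ = max R 0 + 1 := by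
      rw [hx₀def, EuclideanSpace.norm_single]
      rw [Real.norm_eq_abs, abs_of_pos (by positivity)]
    have hVx₀ : c + 1 ≤ V x₀ := hR x₀ (by rw [hnorm]; linarith [le_max_left R 0])
    have hmem : γ ∈ Icc (V 0) (V x₀) := ⟨by rw [hV0]; exact hγ.le, by linarith⟩
    obtain ⟨x₁, hx₁⟩ := intermediate_value_univ (0:EuclideanSpace ℝ (Fin n)) x₀ hV.continuous hmem
    exact ⟨x₁, le_of_eq hx₁.symm, hx₁.le.trans hγc⟩
  -- the continuous decrease function on the product
  set Φ : EuclideanSpace ℝ (Fin n) × (EuclideanSpace ℝ (Fin nh) × EuclideanSpace ℝ (Fin mh)) → ℝ := fun p =>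
    inner (𝕜 := ℝ) (gradient V p.1)
      (f_e p.1 p.2.1 p.2.2 + (WithLp.equiv 2 (Fin n → ℝ)).symm
        ((g_e p.1 p.2.1).mulVec (κ p.1 p.2.1 p.2.2))) with hΦdef
  have hgrad : Continuous fun x : EuclideanSpace ℝ (Fin n) => gradient V x := by
    have : Continuous fun x : EuclideanSpace ℝ (Fin n) =>
        (InnerProductSpace.toDual ℝ (EuclideanSpace ℝ (Fin n))).symm (fderiv ℝ V x) :=
      (InnerProductSpace.toDual ℝ (EuclideanSpace ℝ (Fin n))).symm.continuous.comp (hV.continuous_fderiv one_ne_zero)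
    exact this
  have hΦcont : Continuous Φ := by
    apply Continuous.inner (hgrad.comp continuous_fst)
    apply hf_cont.add
    apply (PiLp.continuous_toLp 2 fun _ : Fin n => ℝ).comp
    exact Continuous.matrix_mulVec
      (hg_cont.comp (continuous_fst.prodMk (continuous_fst.comp continuous_snd)))
      ((PiLp.continuous_ofLp 2 fun _ : Fin m => ℝ).comp hκ_cont)
  obtain ⟨p₀, hp₀S, hp₀max⟩ := (hAcp.prod (hXcp.prod hUcp)).exists_isMaxOn
    (hAne.prod (hXne.prod hUne)) hΦcont.continuousOn
  set ε : ℝ := -Φ p₀ with hεdef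
  have hε : 0 < ε := by
    have := hdecr p₀.1 p₀.2.1 hp₀S.2.1 p₀.2.2 hp₀S.2.2 hp₀S.1.1
    simp only [hεdef, hΦdef]
    linarith
  have hDε : ∀ t, 0 ≤ t → γ ≤ W t → W t ≤ c → D t ≤ -ε := by
    intro t ht h1 h2
    have h3 := hp₀max (a := (e t, xhat t, uhat t)) ⟨⟨h1, h2⟩, hxhat t ht, huhat t ht⟩
    have h4 : Φ (e t, xhat t, uhat t) ≤ Φ p₀ := h3
    have h5 : D t = Φ (e t, xhat t, uhat t) := rfl
    simp only [hεdef]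
    linarith
  have hWc_all : ∀ t, 0 ≤ t → W t ≤ c :=
    fun t ht => barrier_aux hW hD le_rfl hγc (le_max_left _ _) t ht
  -- finite-time entry
  have hT : ∃ T : ℝ, 0 ≤ T ∧ W T ≤ γ := by
    by_contra hcon
    push_neg at hcon
    have hcon' : ∀ T : ℝ, 0 ≤ T → γ < W T := hcon
    set φ : ℝ → ℝ := fun t => W t + ε * t with hφdef
    have hφder : ∀ t : ℝ, 0 < t → HasDerivAt φ (D t + ε) t := by
      intro t ht
      have h1 : HasDerivAt W (D t) t := (hW t ht.le).hasDerivAt (Ici_mem_nhds ht)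
      have h2 : HasDerivAt (fun x : ℝ => ε * x) ε t := by
        simpa using (hasDerivAt_id t).const_mul ε
      exact h1.add h2
    have hφanti : AntitoneOn φ (Ici (0:ℝ)) := by
      have hWcont : ContinuousOn W (Ici 0) := fun u hu => (hW u hu).continuousWithinAt
      apply antitoneOn_of_deriv_nonpos (convex_Ici 0)
      · exact hWcont.add (continuous_const.mul continuous_id).continuousOn
      · intro t ht
        rw [interior_Ici] at ht
        exact (hφder t (mem_Ioi.mp ht)).differentiableAt.differentiableWithinAt
      · intro t ht
        rw [interior_Ici] at ht
        rw [(hφder t (mem_Ioi.mp ht)).deriv]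
        have := hDε t ht.le (hcon' t ht.le).le (hWc_all t ht.le)
        linarith
    have h0 : γ < W 0 := hcon' 0 le_rfl
    set t₁ : ℝ := (W 0 - γ) / ε + 1 with ht₁def
    have ht₁pos : 0 < t₁ := by
      have hq : 0 < (W 0 - γ) / ε := div_pos (by linarith) hε
      rw [ht₁def]; linarith
    have := hφanti (self_mem_Ici) (mem_Ici.2 ht₁pos.le) ht₁pos.le
    have hq : ε * ((W 0 - γ) / ε) = W 0 - γ := by field_simp
    have hεt₁ : ε * t₁ = (W 0 - γ) + ε := by rw [ht₁def, mul_add, mul_one, hq]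
    have hle : W t₁ ≤ γ - ε := by
      simp only [hφdef] at this
      nlinarith
    linarith [hcon' t₁ ht₁pos.le, hle]
  obtain ⟨T, hT0, hTγ⟩ := hT
  have hmain : ∀ t, T ≤ t → W t ≤ γ := barrier_aux hW hD hT0 le_rfl hTγ
  refine ⟨⟨T, hT0, hmain⟩, ?_⟩
  have hzero : ∀ t, T ≤ t →
      Metric.infDist (e t) {y : EuclideanSpace ℝ (Fin n) | V y ≤ γ} = 0 :=
    fun t ht => Metric.infDist_zero_of_mem (hmain t ht)
  exact Tendsto.congr' (eventually_atTop.2 ⟨T, fun t ht => (hzero t ht).symm⟩) tendsto_const_nhds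
end

section
/- Let n, n̂, m̂, m be positive integers, γ > 0, X̂ ⊆ ℝ^n̂, Û ⊆ ℝ^m̂, u̲, ū ∈ ℝᵐ. Let V : ℝⁿ → ℝ be continuously differentiable with V(0) = 0 and V(e) > 0 for e ≠ 0, let f_e : ℝⁿ × ℝ^n̂ × ℝ^m̂ → ℝⁿ, g_e : ℝⁿ × ℝ^n̂ → Matrix(n, m, ℝ), κ : ℝⁿ × ℝ^n̂ × ℝ^m̂ → ℝᵐ, and assume: (a) for all e, x̂ ∈ X̂, û ∈ Û with V(e) ≥ γ, ⟪∇V(e), f_e(e, x̂, û) + g_e(e, x̂) κ(e, x̂, û)⟫ < 0; and (b) for every i, every e with V(e) ≤ γ, every x̂ ∈ X̂ and û ∈ Û, u̲_i ≤ κ_i(e, x̂, û) ≤ ū_i. Let x̂ : ℝ → ℝ^n̂ and û : ℝ → ℝ^m̂ satisfy x̂(t) ∈ X̂ and û(t) ∈ Û for all t ≥ 0, and let e : ℝ → ℝⁿ be differentiable on [0, ∞) with e'(t) = f_e(e(t), x̂(t), û(t)) + g_e(e(t), x̂(t)) κ(e(t), x̂(t), û(t)) for all t ≥ 0 and V(e(0))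 ≤ γ. Then the low level control u(t) := κ(e(t), x̂(t), û(t)) satisfies the input constraints u̲ ≤ u(t) ≤ ū componentwise for all t ≥ 0. -/
open Matrix Set

/-- Combining the forward invariance of Proposition 1 with the set containment conditions
(eq:uUB) and (eq:uLB): if the sublevel set `Ω_γ^V` is forward invariant for the closed-loop
error dynamics and the control law `κ` respects the componentwise bounds `u̲ ≤ κ ≤ ū` on
`Ω_γ^V × Xhat × Uhat`, then the closed-loop low level control
`u t = κ (e t) (xhat t) (uhat t)` satisfies `u̲ ≤ u t ≤ ū` for all `t ≥ 0`. -/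
theorem low_level_control_respects_bounds
    (n nh mh m : ℕ) (hn : 0 < n) (hnh : 0 < nh) (hmh : 0 < mh) (hm : 0 < m)
    (γ : ℝ) (hγ : 0 < γ)
    (Xhat : Set (EuclideanSpace ℝ (Fin nh))) (Uhat : Set (EuclideanSpace ℝ (Fin mh)))
    (ulow ubar : EuclideanSpace ℝ (Fin m))
    (V : EuclideanSpace ℝ (Fin n) → ℝ) (hV : ContDiff ℝ 1 V)
    (hV0 : V 0 = 0) (hVpos : ∀ e : EuclideanSpace ℝ (Fin n), e ≠ 0 → 0 < V e)
    (f_e : EuclideanSpace ℝ (Fin n) → EuclideanSpace ℝ (Fin nh) → EuclideanSpace ℝ (Fin mh) →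
      EuclideanSpace ℝ (Fin n))
    (g_e : EuclideanSpace ℝ (Fin n) → EuclideanSpace ℝ (Fin nh) → Matrix (Fin n) (Fin m) ℝ)
    (κ : EuclideanSpace ℝ (Fin n) → EuclideanSpace ℝ (Fin nh) → EuclideanSpace ℝ (Fin mh) →
      EuclideanSpace ℝ (Fin m))
    (hdecr : ∀ (e : EuclideanSpace ℝ (Fin n)), ∀ xh ∈ Xhat, ∀ uh ∈ Uhat, γ ≤ V e →
      inner (𝕜 := ℝ) (gradient V e)
        (f_e e xh uh + (WithLp.equiv 2 (Fin n → ℝ)).symm ((g_e e xh).mulVec (κ e xh uh))) < 0)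
    (hbounds : ∀ (i : Fin m) (e : EuclideanSpace ℝ (Fin n)), ∀ xh ∈ Xhat, ∀ uh ∈ Uhat,
      V e ≤ γ → ulow i ≤ κ e xh uh i ∧ κ e xh uh i ≤ ubar i)
    (xhat : ℝ → EuclideanSpace ℝ (Fin nh)) (uhat : ℝ → EuclideanSpace ℝ (Fin mh))
    (hxhat : ∀ t : ℝ, 0 ≤ t → xhat t ∈ Xhat) (huhat : ∀ t : ℝ, 0 ≤ t → uhat t ∈ Uhat)
    (e : ℝ → EuclideanSpace ℝ (Fin n))
    (he : ∀ t : ℝ, 0 ≤ t →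
      HasDerivWithinAt e
        (f_e (e t) (xhat t) (uhat t) +
          (WithLp.equiv 2 (Fin n → ℝ)).symm
            ((g_e (e t) (xhat t)).mulVec (κ (e t) (xhat t) (uhat t))))
        (Ici (0 : ℝ)) t)
    (hinit : V (e 0) ≤ γ) :
    ∀ t : ℝ, 0 ≤ t → ∀ i : Fin m,
      ulow i ≤ κ (e t) (xhat t) (uhat t) i ∧ κ (e t) (xhat t) (uhat t) i ≤ ubar i := by
  -- the closed-loop vector field along the trajectory
  set ψ : ℝ → EuclideanSpace ℝ (Fin n) := fun t =>
    f_e (e t) (xhat t) (uhat t) +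
      (WithLp.equiv 2 (Fin n → ℝ)).symm
        ((g_e (e t) (xhat t)).mulVec (κ (e t) (xhat t) (uhat t))) with hψ
  -- φ = V ∘ e has derivative ⟪∇V(e t), ψ t⟫ within Ici 0
  set φ : ℝ → ℝ := fun t => V (e t) with hφdef
  have hVdiff : Differentiable ℝ V := hV.differentiable one_ne_zero
  have hφderiv : ∀ t : ℝ, 0 ≤ t →
      HasDerivWithinAt φ (inner (𝕜 := ℝ) (gradient V (e t)) (ψ t)) (Ici (0 : ℝ)) t := by
    intro t ht
    have hg : HasFDerivAt V ((InnerProductSpace.toDual ℝ _) (gradient V (e t))) (e t) :=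
      (hVdiff (e t)).hasGradientAt.hasFDerivAt
    have := hg.comp_hasDerivWithinAt t (he t ht)
    exact this
  -- forward invariance of the sublevel set
  have key : ∀ t : ℝ, 0 ≤ t → φ t ≤ γ := by
    intro t₁ ht₁
    by_contra hcon
    push_neg at hcon
    have hcont : ContinuousOn φ (Icc 0 t₁) := fun x hx =>
      ((hφderiv x hx.1).continuousWithinAt).mono (Icc_subset_Ici_self)
    set S : Set ℝ := Icc 0 t₁ ∩ {x | φ x ≤ γ} with hSdef
    have hSne : S.Nonempty := ⟨0, ⟨le_rfl, ht₁⟩, hinit⟩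
    have hSbdd : BddAbove S := ⟨t₁, fun x hx => hx.1.2⟩
    have hSclosed : IsClosed S :=
      hcont.preimage_isClosed_of_isClosed isClosed_Icc isClosed_Iic
    set s := sSup S with hs
    have hsS : s ∈ S := hSclosed.csSup_mem hSne hSbdd
    have hsle : s ≤ t₁ := hsS.1.2
    have hs0 : 0 ≤ s := hsS.1.1
    have hst : s < t₁ := hsle.lt_of_ne fun h => not_le.mpr hcon (h ▸ hsS.2)
    have hgt : ∀ x, s < x → x ≤ t₁ → γ < φ x := by
      intro x hsx hxt
      by_contra hle
      push_neg at hle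
      have : x ∈ S := ⟨⟨le_trans hs0 hsx.le, hxt⟩, hle⟩
      exact absurd (le_csSup hSbdd this) (not_le.mpr hsx)
    -- φ is strictly decreasing on [s, t₁]
    have hanti : StrictAntiOn φ (Icc s t₁) := by
      apply strictAntiOn_of_deriv_neg (convex_Icc s t₁)
        (hcont.mono (Icc_subset_Icc hs0 le_rfl))
      intro x hx
      rw [interior_Icc] at hx
      have hx0 : 0 < x := lt_of_le_of_lt hs0 hx.1
      have hxd : HasDerivAt φ (inner (𝕜 := ℝ) (gradient V (e x)) (ψ x)) x :=
        (hφderiv x hx0.le).hasDerivAt (Ici_mem_nhds hx0)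
      rw [hxd.deriv]
      exact hdecr (e x) _ (hxhat x hx0.le) _ (huhat x hx0.le)
        (le_of_lt (hgt x hx.1 hx.2.le))
    have := hanti ⟨le_rfl, hsle⟩ ⟨hsle, le_rfl⟩ hst
    exact absurd this (asymm (lt_of_le_of_lt hsS.2 hcon))
  intro t ht i
  exact hbounds i (e t) _ (hxhat t ht) _ (huhat t ht) (key t ht)
end
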